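/- arXiv:2307.02711 — 3 statements merged into one kernel-verified Lean document; each statement's English description precedes it below -/
import Mathlib

section
/- A letter x ∈ [n] is a double ascent of a permutation π ∈ S_n if and only if x is a double descent of φ_x(π); likewise, x is a double descent of π if and only if x is a double ascent of φ_x(π). -/
namespace DMTCS

def entry (l : List ℕ) (i : ℕ) : WithTop ℕ :=
  if h : 1 ≤ i ∧ i ≤ l.length then ((l.get ⟨i - 1, by omega⟩ : ℕ) : WithTop ℕ) else ⊤

def IsPeak (l : List ℕ) (x : ℕ) : Prop :=
  ∃ i, 1 ≤ i ∧ i ≤ l.length ∧ entry l i = (x : WithTop ℕ) ∧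
    entry l (i - 1) < entry l i ∧ entry l (i + 1) < entry l i

def IsValley (l : List ℕ) (x : ℕ) : Prop :=
  ∃ i, 1 ≤ i ∧ i ≤ l.length ∧ entry l i = (x : WithTop ℕ) ∧
    entry l i < entry l (i - 1) ∧ entry l i < entry l (i + 1)

def IsDblAsc (l : List ℕ) (x : ℕ) : Prop :=
  ∃ i, 1 ≤ i ∧ i ≤ l.length ∧ entry l i = (x : WithTop ℕ) ∧
    entry l (i - 1) < entry l i ∧ entry l i < entry l (i + 1)

def IsDblDes (l : List ℕ) (x : ℕ) : Prop :=
  ∃ i, 1 ≤ i ∧ i ≤ l.length ∧ entry l i = (x : WithTop ℕ) ∧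
    entry l (i + 1) < entry l i ∧ entry l i < entry l (i - 1)

def nbrL (a : List ℕ) : WithTop ℕ := a.getLast?.elim ⊤ (fun v => (v : WithTop ℕ))
def nbrR (b : List ℕ) : WithTop ℕ := b.head?.elim ⊤ (fun v => (v : WithTop ℕ))

lemma entry_pos {l : List ℕ} {i : ℕ} (h1 : 1 ≤ i) (h2 : i ≤ l.length) :
    entry l i = ((l[i-1]'(by omega) : ℕ) : WithTop ℕ) := by
  rw [entry, dif_pos ⟨h1, h2⟩]
  simp

lemma entry_top {l : List ℕ} {i : ℕ} (h : ¬ (1 ≤ i ∧ i ≤ l.length)) : entry l i = ⊤ :=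
  dif_neg h

lemma entry_left (a b : List ℕ) (x : ℕ) : entry (a ++ x :: b) a.length = nbrL a := by
  rcases eq_or_ne a [] with rfl | ha
  · rw [entry_top (by simp)]; rfl
  · have hpos : 1 ≤ a.length := List.length_pos_iff.mpr ha
    have h1 : a.length - 1 < a.length := by omega
    rw [entry_pos hpos (by simp), List.getElem_append_left h1]
    rw [nbrL, List.getLast?_eq_getElem?, List.getElem?_eq_getElem h1]
    rfl

lemma entry_mid (a b : List ℕ) (x : ℕ) :
    entry (a ++ x :: b) (a.length + 1) = (x : WithTop ℕ) := by
  rw [entry_pos (by omega) (by simp)]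
  congr 1
  simp [List.getElem_append_right (le_refl a.length)]

lemma entry_right (a b : List ℕ) (x : ℕ) :
    entry (a ++ x :: b) (a.length + 2) = nbrR b := by
  rcases eq_or_ne b [] with rfl | hb
  · rw [entry_top (by simp)]; rfl
  · have hpos : 1 ≤ b.length := List.length_pos_iff.mpr hb
    have hlen : a.length + 2 ≤ (a ++ x :: b).length := by simp; omega
    rw [entry_pos (by omega) hlen]
    rw [List.getElem_append_right (by omega : a.length ≤ a.length + 2 - 1)]
    have hidx : a.length + 2 - 1 - a.length = 1 := by omega
    rw [nbrR, List.head?_eq_head hb]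
    simp only [hidx, List.getElem_cons_succ]
    rw [List.getElem_zero]
    rfl

lemma char (a b : List ℕ) (x : ℕ) (ha : x ∉ a) (hb : x ∉ b)
    (P : WithTop ℕ → WithTop ℕ → WithTop ℕ → Prop) :
    (∃ i, 1 ≤ i ∧ i ≤ (a ++ x :: b).length ∧ entry (a ++ x :: b) i = (x : WithTop ℕ) ∧
      P (entry (a ++ x :: b) (i - 1)) (entry (a ++ x :: b) i) (entry (a ++ x :: b) (i + 1))) ↔
    P (nbrL a) (x : WithTop ℕ) (nbrR b) := by
  constructor
  · rintro ⟨i, h1, h2, hxi, hP⟩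
    have hi : i = a.length + 1 := by
      rw [entry_pos h1 h2] at hxi
      have hget : (a ++ x :: b)[i-1]'(by omega) = x := by exact_mod_cast hxi
      by_contra hne
      have hne' : i - 1 ≠ a.length := fun h => hne (by omega)
      rcases lt_or_gt_of_ne hne' with hlt | hgt
      · rw [List.getElem_append_left hlt] at hget
        exact ha (hget ▸ List.getElem_mem _)
      · have hle : a.length ≤ i - 1 := by omega
        rw [List.getElem_append_right hle] at hget
        have hidx : i - 1 - a.length = (i - 1 - a.length - 1) + 1 := by omega
        have hblen : i - 1 - a.length - 1 < b.length := by
          have := h2; simp at this; omega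
        rw [List.getElem_cons] at hget
        rw [dif_neg (show ¬(i - 1 - a.length = 0) by omega)] at hget
        exact hb (hget ▸ List.getElem_mem _)
    subst hi
    rw [show a.length + 1 - 1 = a.length from rfl, entry_left, entry_mid, entry_right] at hP
    exact hP
  · intro hP
    refine ⟨a.length + 1, by omega, by simp, entry_mid a b x, ?_⟩
    rw [show a.length + 1 - 1 = a.length from rfl, entry_left, entry_mid,
      show a.length + 1 + 1 = a.length + 2 from rfl, entry_right]
    exact hP

lemma dblAsc_iff (a b : List ℕ) (x : ℕ) (ha : x ∉ a) (hb : x ∉ b) :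
    IsDblAsc (a ++ x :: b) x ↔ nbrL a < (x : WithTop ℕ) ∧ (x : WithTop ℕ) < nbrR b :=
  char a b x ha hb (fun p q r => p < q ∧ q < r)

lemma dblDes_iff (a b : List ℕ) (x : ℕ) (ha : x ∉ a) (hb : x ∉ b) :
    IsDblDes (a ++ x :: b) x ↔ nbrR b < (x : WithTop ℕ) ∧ (x : WithTop ℕ) < nbrL a :=
  char a b x ha hb (fun p q r => r < q ∧ q < p)

lemma lt_nbrL {a : List ℕ} {x : ℕ} (h : ∀ v, a.getLast? = some v → x < v) :
    (x : WithTop ℕ) < nbrL a := by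
  rw [nbrL]
  cases h' : a.getLast? with
  | none => exact WithTop.coe_lt_top x
  | some v => simpa using h v h'

lemma lt_nbrR {b : List ℕ} {x : ℕ} (h : ∀ v, b.head? = some v → x < v) :
    (x : WithTop ℕ) < nbrR b := by
  rw [nbrR]
  cases h' : b.head? with
  | none => exact WithTop.coe_lt_top x
  | some v => simpa using h v h'

lemma nbrL_lt {a : List ℕ} {x : ℕ} (hne : a ≠ []) (h : ∀ v ∈ a, v < x) :
    nbrL a < (x : WithTop ℕ) := by
  rw [nbrL, List.getLast?_eq_getLast hne]
  simpa using h _ (List.getLast_mem hne)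

lemma nbrR_lt {b : List ℕ} {x : ℕ} (hne : b ≠ []) (h : ∀ v ∈ b, v < x) :
    nbrR b < (x : WithTop ℕ) := by
  rw [nbrR, List.head?_eq_head hne]
  simpa using h _ (List.head_mem hne)

lemma nbrL_append {a b : List ℕ} (hb : b ≠ []) : nbrL (a ++ b) = nbrL b := by
  rw [nbrL, nbrL, List.getLast?_append, List.getLast?_eq_getLast hb]
  rfl

lemma nbrR_append {a b : List ℕ} (ha : a ≠ []) : nbrR (a ++ b) = nbrR a := by
  rw [nbrR, nbrR, List.head?_append, List.head?_eq_head ha]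
  rfl


/-- The valley-hopping involution `φ_x`: writing `l = w1 w2 x w4 w5` where `w2` (resp. `w4`)
is the maximal consecutive subword immediately left (resp. right) of `x` with all letters
smaller than `x`, it sends `l` to `w1 w4 x w2 w5` when `x` is a double ascent or double
descent (equivalently, exactly one of `w2`, `w4` is nonempty), and fixes `l` otherwise. -/
def hop (x : ℕ) (l : List ℕ) : List ℕ :=
  if x ∈ l then
    let l1 := l.takeWhile (fun a => decide (a ≠ x))
    let l2 := (l.dropWhile (fun a => decide (a ≠ x))).tail
    let w2 := (l1.reverse.takeWhile (fun a => decide (a < x))).reverse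
    let w1 := (l1.reverse.dropWhile (fun a => decide (a < x))).reverse
    let w4 := l2.takeWhile (fun a => decide (a < x))
    let w5 := l2.dropWhile (fun a => decide (a < x))
    if (w2 = [] ∧ w4 ≠ []) ∨ (w2 ≠ [] ∧ w4 = []) then
      w1 ++ w4 ++ x :: w2 ++ w5
    else l
  else l

lemma hop_eq (x : ℕ) (l : List ℕ) (hx : x ∈ l) (w1 w2 w4 w5 : List ℕ)
    (h2 : w2 = ((l.takeWhile fun a => decide (a ≠ x)).reverse.takeWhile fun a => decide (a < x)).reverse)
    (h1 : w1 = ((l.takeWhile fun a => decide (a ≠ x)).reverse.dropWhile fun a => decide (a < x)).reverse)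
    (h4 : w4 = ((l.dropWhile fun a => decide (a ≠ x)).tail.takeWhile fun a => decide (a < x)))
    (h5 : w5 = ((l.dropWhile fun a => decide (a ≠ x)).tail.dropWhile fun a => decide (a < x))) :
    hop x l = if (w2 = [] ∧ w4 ≠ []) ∨ (w2 ≠ [] ∧ w4 = []) then
      w1 ++ w4 ++ x :: w2 ++ w5 else l := by
  subst h1 h2 h4 h5
  simp only [hop, if_pos hx]

/-- `x` is a double ascent of `π` iff `x` is a double descent of `φ_x(π)`, and
`x` is a double descent of `π` iff `x` is a double ascent of `φ_x(π)`. -/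
theorem stmt_9 (n : ℕ) (l : List ℕ) (hl : l.Perm (List.range' 1 n)) (x : ℕ) (hx : x ∈ l) :
    (IsDblAsc l x ↔ IsDblDes (hop x l) x) ∧ (IsDblDes l x ↔ IsDblAsc (hop x l) x) := by
  have hnd : l.Nodup := hl.nodup_iff.mpr (List.nodup_range' (s := 1) (n := n))
  set p : ℕ → Bool := fun a => decide (a ≠ x) with hp
  set q : ℕ → Bool := fun a => decide (a < x) with hq
  set l1 := l.takeWhile p with hl1
  have hdne : l.dropWhile p ≠ [] := by
    intro h
    have heq := List.takeWhile_append_dropWhile (p := p) (l := l)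
    rw [h, List.append_nil] at heq
    have := List.mem_takeWhile_imp (p := p) (l := l) (heq ▸ hx)
    simp [hp] at this
  set l2 := (l.dropWhile p).tail with hl2
  have hhead : (l.dropWhile p).head hdne = x := by
    have := List.head_dropWhile_not p (l := l) hdne
    simpa [hp] using this
  have hdecomp : l = l1 ++ x :: l2 := by
    conv_lhs => rw [← List.takeWhile_append_dropWhile (p := p) (l := l)]
    rw [hl1, hl2]
    congr 1
    rw [← hhead]
    exact (List.cons_head_tail hdne).symm
  have hxl1 : x ∉ l1 := by
    intro h
    have := List.mem_takeWhile_imp h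
    simp [hp] at this
  have hxl2 : x ∉ l2 := by
    rw [hdecomp] at hnd
    exact (List.nodup_cons.mp (List.nodup_append.mp hnd).2.1).1
  set w2 := (l1.reverse.takeWhile q).reverse with hw2
  set w1 := (l1.reverse.dropWhile q).reverse with hw1
  set w4 := l2.takeWhile q with hw4
  set w5 := l2.dropWhile q with hw5
  have hl1d : l1 = w1 ++ w2 := by
    rw [hw1, hw2, ← List.reverse_append, List.takeWhile_append_dropWhile, List.reverse_reverse]
  have hl2d : l2 = w4 ++ w5 := (List.takeWhile_append_dropWhile (p := q) (l := l2)).symm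
  have hxw1 : x ∉ w1 := fun h => hxl1 (hl1d ▸ List.mem_append_left _ h)
  have hxw2 : x ∉ w2 := fun h => hxl1 (hl1d ▸ List.mem_append_right _ h)
  have hxw4 : x ∉ w4 := fun h => hxl2 (hl2d ▸ List.mem_append_left _ h)
  have hxw5 : x ∉ w5 := fun h => hxl2 (hl2d ▸ List.mem_append_right _ h)
  have hw2lt : ∀ v ∈ w2, v < x := by
    intro v hv
    have := List.mem_takeWhile_imp (List.mem_reverse.mp (hw2 ▸ hv))
    simpa [hq] using this
  have hw4lt : ∀ v ∈ w4, v < x := by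
    intro v hv
    have := List.mem_takeWhile_imp (hw4 ▸ hv)
    simpa [hq] using this
  have hw1gt : ∀ v, w1.getLast? = some v → x < v := by
    intro v hv
    rw [hw1, List.getLast?_reverse] at hv
    have hne : l1.reverse.dropWhile q ≠ [] := by
      intro h; rw [h] at hv; simp at hv
    have hvh : (l1.reverse.dropWhile q).head hne = v := by
      rw [List.head?_eq_head hne] at hv; exact Option.some_inj.mp hv
    have hnq := List.head_dropWhile_not q (l := l1.reverse) hne
    rw [hvh] at hnq
    have hvmem : v ∈ l1 :=
      List.mem_reverse.mp ((List.dropWhile_sublist q).mem (hvh ▸ List.head_mem hne))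
    have hvne : v ≠ x := fun h => hxl1 (h ▸ hvmem)
    simp [hq] at hnq
    omega
  have hw5gt : ∀ v, w5.head? = some v → x < v := by
    intro v hv
    have hne : l2.dropWhile q ≠ [] := by
      intro h; rw [hw5, h] at hv; simp at hv
    have hvh : (l2.dropWhile q).head hne = v := by
      rw [hw5, List.head?_eq_head hne] at hv; exact Option.some_inj.mp hv
    have hnq := List.head_dropWhile_not q (l := l2) hne
    rw [hvh] at hnq
    have hvmem : v ∈ l2 := (List.dropWhile_sublist q).mem (hvh ▸ List.head_mem hne)
    have hvne : v ≠ x := fun h => hxl2 (h ▸ hvmem)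
    simp [hq] at hnq
    omega
  have hhop := hop_eq x l hx w1 w2 w4 w5 rfl rfl rfl rfl
  by_cases h2e : w2 = [] <;> by_cases h4e : w4 = []
  · -- both empty : x is a valley, hop fixes l
    rw [if_neg (by simp [h2e, h4e])] at hhop
    have hld : l = w1 ++ x :: w5 := by
      rw [hdecomp, hl1d, hl2d, h2e, h4e]; simp
    rw [hhop, hld, dblAsc_iff _ _ _ hxw1 hxw5, dblDes_iff _ _ _ hxw1 hxw5]
    have h1 := lt_nbrL hw1gt
    have h5 := lt_nbrR hw5gt
    constructor <;> constructor <;> rintro ⟨c1, c2⟩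
    · exact absurd c1 (lt_asymm h1)
    · exact absurd c1 (lt_asymm h5)
    · exact absurd c1 (lt_asymm h5)
    · exact absurd c1 (lt_asymm h1)
  · -- w2 = [], w4 ≠ [] : x is a double descent
    rw [if_pos (Or.inl ⟨h2e, h4e⟩), h2e] at hhop
    have hhop' : hop x l = (w1 ++ w4) ++ x :: w5 := by
      rw [hhop]; simp
    have hld : l = w1 ++ x :: (w4 ++ w5) := by
      rw [hdecomp, hl1d, hl2d, h2e]; simp
    have hA : IsDblAsc l x ↔ nbrL w1 < (x : WithTop ℕ) ∧ (x : WithTop ℕ) < nbrR (w4 ++ w5) := by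
      rw [hld]; exact dblAsc_iff w1 (w4 ++ w5) x hxw1 (by simp [hxw4, hxw5])
    have hD : IsDblDes l x ↔ nbrR (w4 ++ w5) < (x : WithTop ℕ) ∧ (x : WithTop ℕ) < nbrL w1 := by
      rw [hld]; exact dblDes_iff w1 (w4 ++ w5) x hxw1 (by simp [hxw4, hxw5])
    have hA' : IsDblAsc (hop x l) x ↔ nbrL (w1 ++ w4) < (x : WithTop ℕ) ∧ (x : WithTop ℕ) < nbrR w5 := by
      rw [hhop']; exact dblAsc_iff (w1 ++ w4) w5 x (by simp [hxw1, hxw4]) hxw5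
    have hD' : IsDblDes (hop x l) x ↔ nbrR w5 < (x : WithTop ℕ) ∧ (x : WithTop ℕ) < nbrL (w1 ++ w4) := by
      rw [hhop']; exact dblDes_iff (w1 ++ w4) w5 x (by simp [hxw1, hxw4]) hxw5
    rw [hA, hD, hA', hD']
    have hR : nbrR (w4 ++ w5) < (x : WithTop ℕ) := by
      rw [nbrR_append h4e]; exact nbrR_lt h4e hw4lt
    have hL : nbrL (w1 ++ w4) < (x : WithTop ℕ) := by
      rw [nbrL_append h4e]; exact nbrL_lt h4e hw4lt
    have h1 := lt_nbrL hw1gt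
    have h5 := lt_nbrR hw5gt
    constructor
    · constructor
      · rintro ⟨c1, c2⟩; exact absurd c2 (lt_asymm hR)
      · rintro ⟨c1, c2⟩; exact absurd c1 (lt_asymm h5)
    · constructor
      · intro _; exact ⟨hL, h5⟩
      · intro _; exact ⟨hR, h1⟩
  · -- w2 ≠ [], w4 = [] : x is a double ascent
    rw [if_pos (Or.inr ⟨h2e, h4e⟩), h4e] at hhop
    have hhop' : hop x l = w1 ++ x :: (w2 ++ w5) := by
      rw [hhop]; simp
    have hld : l = (w1 ++ w2) ++ x :: w5 := by
      rw [hdecomp, hl1d, hl2d, h4e]; simp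
    have hA : IsDblAsc l x ↔ nbrL (w1 ++ w2) < (x : WithTop ℕ) ∧ (x : WithTop ℕ) < nbrR w5 := by
      rw [hld]; exact dblAsc_iff (w1 ++ w2) w5 x (by simp [hxw1, hxw2]) hxw5
    have hD : IsDblDes l x ↔ nbrR w5 < (x : WithTop ℕ) ∧ (x : WithTop ℕ) < nbrL (w1 ++ w2) := by
      rw [hld]; exact dblDes_iff (w1 ++ w2) w5 x (by simp [hxw1, hxw2]) hxw5
    have hA' : IsDblAsc (hop x l) x ↔ nbrL w1 < (x : WithTop ℕ) ∧ (x : WithTop ℕ) < nbrR (w2 ++ w5) := by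
      rw [hhop']; exact dblAsc_iff w1 (w2 ++ w5) x hxw1 (by simp [hxw2, hxw5])
    have hD' : IsDblDes (hop x l) x ↔ nbrR (w2 ++ w5) < (x : WithTop ℕ) ∧ (x : WithTop ℕ) < nbrL w1 := by
      rw [hhop']; exact dblDes_iff w1 (w2 ++ w5) x hxw1 (by simp [hxw2, hxw5])
    rw [hA, hD, hA', hD']
    have hL : nbrL (w1 ++ w2) < (x : WithTop ℕ) := by
      rw [nbrL_append h2e]; exact nbrL_lt h2e hw2lt
    have hR : nbrR (w2 ++ w5) < (x : WithTop ℕ) := by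
      rw [nbrR_append h2e]; exact nbrR_lt h2e hw2lt
    have h1 := lt_nbrL hw1gt
    have h5 := lt_nbrR hw5gt
    constructor
    · constructor
      · intro _; exact ⟨hR, h1⟩
      · intro _; exact ⟨hL, h5⟩
    · constructor
      · rintro ⟨c1, c2⟩; exact absurd c1 (lt_asymm h5)
      · rintro ⟨c1, c2⟩; exact absurd c2 (lt_asymm hR)
  · -- both nonempty : x is a peak, hop fixes l
    rw [if_neg (by simp [h2e, h4e])] at hhop
    have hld : l = (w1 ++ w2) ++ x :: (w4 ++ w5) := by
      rw [hdecomp, hl1d, hl2d]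
    rw [hhop, hld, dblAsc_iff _ _ _ (by simp [hxw1, hxw2]) (by simp [hxw4, hxw5]),
      dblDes_iff _ _ _ (by simp [hxw1, hxw2]) (by simp [hxw4, hxw5])]
    have hL : nbrL (w1 ++ w2) < (x : WithTop ℕ) := by
      rw [nbrL_append h2e]; exact nbrL_lt h2e hw2lt
    have hR : nbrR (w4 ++ w5) < (x : WithTop ℕ) := by
      rw [nbrR_append h4e]; exact nbrR_lt h4e hw4lt
    constructor <;> constructor <;> rintro ⟨c1, c2⟩
    · exact absurd c2 (lt_asymm hR)
    · exact absurd c2 (lt_asymm hL)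
    · exact absurd c2 (lt_asymm hL)
    · exact absurd c2 (lt_asymm hR)

end DMTCS
end

section
/- The descent number des is homomesic with average (n−1)/2 under valley-hopping: for every orbit Π of the valley-hopping Z_2^n-action on S_n, the average of des over Π equals (n−1)/2. -/
namespace DMTCS

/-- The number of descents of the word `l`. -/
def desL (l : List ℕ) : ℕ :=
  ((List.range (l.length - 1)).filter (fun i => decide (l.getD (i + 1) 0 < l.getD i 0))).length

lemma tw_app (p : ℕ → Bool) (u w : List ℕ) :
    (u ++ w).takeWhile p = if u.all p then u ++ w.takeWhile p else u.takeWhile p := by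
  induction u with
  | nil => simp
  | cons a t ih => by_cases h : p a <;> simp [List.takeWhile_cons, h, ih] <;> split <;> simp_all

lemma dw_app (p : ℕ → Bool) (u w : List ℕ) :
    (u ++ w).dropWhile p = if u.all p then w.dropWhile p else u.dropWhile p ++ w := by
  induction u with
  | nil => simp
  | cons a t ih => by_cases h : p a <;> simp [List.dropWhile_cons, h, ih]

lemma tw_stop (p : ℕ → Bool) (u : List ℕ) (b : ℕ) (c : List ℕ) (hb : ¬ p b) :
    (u ++ b :: c).takeWhile p = u.takeWhile p := by
  rw [tw_app]; split
  · next h => rw [List.takeWhile_cons_of_neg hb, List.append_nil,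
      List.takeWhile_eq_self_iff.mpr (by simpa [List.all_eq_true] using h)]
  · rfl

lemma dw_stop (p : ℕ → Bool) (u : List ℕ) (b : ℕ) (c : List ℕ) (hb : ¬ p b) :
    (u ++ b :: c).dropWhile p = u.dropWhile p ++ b :: c := by
  rw [dw_app]; split
  · next h => rw [List.dropWhile_cons_of_neg hb,
      List.dropWhile_eq_nil_iff.mpr (by simpa [List.all_eq_true] using h)]; rfl
  · rfl

lemma hop_not_mem (x : ℕ) (l : List ℕ) (h : x ∉ l) : hop x l = l := by
  simp [hop, h]

lemma hop_max (m : ℕ) (u v : List ℕ) (hu : ∀ a ∈ u, a < m) (hv : ∀ a ∈ v, a < m) :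
    hop m (u ++ m :: v) = if v = [] then m :: u else if u = [] then v ++ [m] else u ++ m :: v := by
  have hmem : m ∈ u ++ m :: v := by simp
  have h1 : (u ++ m :: v).takeWhile (fun a => decide (a ≠ m)) = u := by
    rw [tw_stop _ _ _ _ (by simp), List.takeWhile_eq_self_iff.mpr]
    intro a ha; simpa using (hu a ha).ne
  have h2 : (u ++ m :: v).dropWhile (fun a => decide (a ≠ m)) = m :: v := by
    rw [dw_stop _ _ _ _ (by simp), List.dropWhile_eq_nil_iff.mpr]
    · rfl
    · intro a ha; simpa using (hu a ha).ne
  simp only [hop, if_pos hmem, h1, h2, List.tail_cons]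
  rw [List.takeWhile_eq_self_iff.mpr (by intro a ha; simp at ha ⊢; exact hu a ha),
      List.dropWhile_eq_nil_iff.mpr (by intro a ha; simp at ha ⊢; exact hu a ha),
      List.takeWhile_eq_self_iff.mpr (by intro a ha; simp at ha ⊢; exact hv a ha),
      List.dropWhile_eq_nil_iff.mpr (by intro a ha; simp at ha ⊢; exact hv a ha)]
  simp only [List.reverse_reverse, List.reverse_nil]
  rcases eq_or_ne v [] with rfl | hv0
  · rcases eq_or_ne u [] with rfl | hu0
    · simp
    · simp [hu0]
  · rcases eq_or_ne u [] with rfl | hu0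
    · simp [hv0]
    · simp [hu0, hv0]

lemma tail_app (A w : List ℕ) (h : A ≠ []) : (A ++ w).tail = A.tail ++ w := by
  cases A with
  | nil => exact absurd rfl h
  | cons a t => simp

lemma hop_left (x y : ℕ) (u v : List ℕ) (hx : x ∈ u) (hxy : x < y) :
    hop x (u ++ y :: v) = hop x u ++ y :: v := by
  have hmem : x ∈ u ++ y :: v := by simp [hx]
  have hall : u.all (fun a => decide (a ≠ x)) = false :=
    List.all_eq_false.mpr ⟨x, hx, by simp⟩
  have h1 : (u ++ y :: v).takeWhile (fun a => decide (a ≠ x))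
      = u.takeWhile (fun a => decide (a ≠ x)) := by
    rw [tw_app, hall]; simp only [Bool.false_eq_true, if_false]
  have hdw : u.dropWhile (fun a => decide (a ≠ x)) ≠ [] := by
    rw [Ne, List.dropWhile_eq_nil_iff]
    push_neg; exact ⟨x, hx, by simp⟩
  have h2 : ((u ++ y :: v).dropWhile (fun a => decide (a ≠ x))).tail
      = (u.dropWhile (fun a => decide (a ≠ x))).tail ++ y :: v := by
    rw [dw_app, hall]; simp only [Bool.false_eq_true, if_false]
    rw [tail_app _ _ hdw]
  have hny : ¬ ((fun a => decide (a < x)) y = true) := by simp; omega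
  have h3 := tw_stop (fun a => decide (a < x))
    ((u.dropWhile (fun a => decide (a ≠ x))).tail) y v hny
  have h4 := dw_stop (fun a => decide (a < x))
    ((u.dropWhile (fun a => decide (a ≠ x))).tail) y v hny
  simp only [hop, if_pos hmem, if_pos hx, h1, h2, h3, h4]
  by_cases hC : ((List.takeWhile (fun a => decide (a < x)) (List.takeWhile (fun a => decide (a ≠ x)) u).reverse).reverse = [] ∧
        List.takeWhile (fun a => decide (a < x)) (List.dropWhile (fun a => decide (a ≠ x)) u).tail ≠ []) ∨
      ((List.takeWhile (fun a => decide (a < x)) (List.takeWhile (fun a => decide (a ≠ x)) u).reverse).reverse ≠ [] ∧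
        List.takeWhile (fun a => decide (a < x)) (List.dropWhile (fun a => decide (a ≠ x)) u).tail = [])
  · rw [if_pos hC, if_pos hC]; simp
  · rw [if_neg hC, if_neg hC]

lemma hop_right (x y : ℕ) (u v : List ℕ) (hxu : x ∉ u) (hxv : x ∈ v) (hxy : x < y) :
    hop x (u ++ y :: v) = u ++ y :: hop x v := by
  have hmem : x ∈ u ++ y :: v := by simp [hxv]
  have hall : u.all (fun a => decide (a ≠ x)) = true := by
    rw [List.all_eq_true]; intro a ha; simp; rintro rfl; exact hxu ha
  have hyx : ((fun a => decide (a ≠ x)) y) = true := by simp; omega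
  have hA : (u ++ y :: v).takeWhile (fun a => decide (a ≠ x))
      = u ++ y :: v.takeWhile (fun a => decide (a ≠ x)) := by
    rw [tw_app, if_pos hall, List.takeWhile_cons, if_pos hyx]
  have hl2 : ((u ++ y :: v).dropWhile (fun a => decide (a ≠ x))).tail
      = (v.dropWhile (fun a => decide (a ≠ x))).tail := by
    rw [dw_app, if_pos hall, List.dropWhile_cons, if_pos hyx]
  have hrev : ((u ++ y :: v).takeWhile (fun a => decide (a ≠ x))).reverse
      = (v.takeWhile (fun a => decide (a ≠ x))).reverse ++ y :: u.reverse := by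
    rw [hA]; simp
  have hny : ¬ ((fun a => decide (a < x)) y = true) := by simp; omega
  have hw2 : (List.takeWhile (fun a => decide (a < x))
        ((u ++ y :: v).takeWhile (fun a => decide (a ≠ x))).reverse).reverse
      = (List.takeWhile (fun a => decide (a < x))
        (v.takeWhile (fun a => decide (a ≠ x))).reverse).reverse := by
    rw [hrev, tw_stop _ _ _ _ hny]
  have hw1 : (List.dropWhile (fun a => decide (a < x))
        ((u ++ y :: v).takeWhile (fun a => decide (a ≠ x))).reverse).reverse
      = u ++ y :: (List.dropWhile (fun a => decide (a < x))
        (v.takeWhile (fun a => decide (a ≠ x))).reverse).reverse := by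
    rw [hrev, dw_stop _ _ _ _ hny]; simp
  simp only [hop, if_pos hmem, if_pos hxv, hl2, hw2, hw1]
  by_cases hC : ((List.takeWhile (fun a => decide (a < x)) (List.takeWhile (fun a => decide (a ≠ x)) v).reverse).reverse = [] ∧
        List.takeWhile (fun a => decide (a < x)) (List.dropWhile (fun a => decide (a ≠ x)) v).tail ≠ []) ∨
      ((List.takeWhile (fun a => decide (a < x)) (List.takeWhile (fun a => decide (a ≠ x)) v).reverse).reverse ≠ [] ∧
        List.takeWhile (fun a => decide (a < x)) (List.dropWhile (fun a => decide (a ≠ x)) v).tail = [])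
  · rw [if_pos hC, if_pos hC]; simp
  · rw [if_neg hC, if_neg hC]

def desR : List ℕ → ℕ
  | [] => 0
  | [_] => 0
  | a :: b :: t => (if b < a then 1 else 0) + desR (b :: t)

lemma desL_eq_desR (l : List ℕ) : desL l = desR l := by
  match l with
  | [] => rfl
  | [a] => rfl
  | a :: b :: t =>
    have ih := desL_eq_desR (b :: t)
    simp only [desL, desR] at *
    rw [List.length_cons, List.length_cons, Nat.add_sub_cancel,
      List.range_succ_eq_map, List.filter_cons, List.filter_map]
    have hc : List.filter ((fun i => decide ((a::b::t).getD (i+1) 0 < (a::b::t).getD i 0)) ∘ Nat.succ) (List.range t.length)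
        = List.filter (fun i => decide ((b::t).getD (i+1) 0 < (b::t).getD i 0)) (List.range t.length) := by
      apply List.filter_congr
      intro i _
      simp [Nat.succ_eq_add_one, List.getD_cons_succ]
    rw [hc, ← ih]
    simp only [desL, List.length_cons, Nat.add_sub_cancel, List.getD_cons_succ, List.getD_cons_zero]
    split <;> simp_all <;> omega

lemma desR_cons_of_lt (m b : ℕ) (t : List ℕ) (hh : b < m) :
    desR (m :: b :: t) = 1 + desR (b :: t) := by simp [desR, hh]

lemma desR_append (u : List ℕ) (m : ℕ) (v : List ℕ) (hu : ∀ a ∈ u, a < m) :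
    desR (u ++ m :: v) = desR u + desR (m :: v) := by
  match u with
  | [] => simp [desR]
  | [a] =>
    have ha : a < m := hu a (by simp)
    simp [desR, Nat.not_lt.mpr ha.le]
  | a :: b :: t =>
    have ih := desR_append (b :: t) m v (fun x hx => hu x (by simp at hx ⊢; tauto))
    show (if b < a then 1 else 0) + desR (b :: t ++ m :: v) = _
    rw [ih]; show _ = (if b < a then 1 else 0) + desR (b :: t) + desR (m :: v)
    omega

lemma dropWhile_ne (x : ℕ) (l : List ℕ) (h : x ∈ l) :
    l.dropWhile (fun a => decide (a ≠ x)) = x :: (l.dropWhile (fun a => decide (a ≠ x))).tail := by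
  induction l with
  | nil => cases h
  | cons a t ih =>
    by_cases hax : a = x
    · subst hax; rw [List.dropWhile_cons, if_neg (by simp)]; rfl
    · rw [List.dropWhile_cons, if_pos (by simp [hax])]
      exact ih (by rcases List.mem_cons.mp h with h1 | h2; exacts [absurd h1.symm hax, h2])

lemma hop_perm (x : ℕ) (l : List ℕ) : (hop x l).Perm l := by
  by_cases hmem : x ∈ l
  · have hdecomp : l = ((l.takeWhile (fun a => decide (a ≠ x))).reverse.dropWhile
          (fun a => decide (a < x))).reverse
        ++ ((l.takeWhile (fun a => decide (a ≠ x))).reverse.takeWhile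
          (fun a => decide (a < x))).reverse
        ++ x :: (((l.dropWhile (fun a => decide (a ≠ x))).tail).takeWhile (fun a => decide (a < x))
        ++ ((l.dropWhile (fun a => decide (a ≠ x))).tail).dropWhile (fun a => decide (a < x))) := by
      rw [List.takeWhile_append_dropWhile]
      rw [← List.reverse_append, List.takeWhile_append_dropWhile, List.reverse_reverse]
      conv_lhs => rw [← List.takeWhile_append_dropWhile (p := fun a => decide (a ≠ x)) (l := l)]
      rw [dropWhile_ne x l hmem, List.tail_cons]
    simp only [hop, if_pos hmem]
    split
    · rw [List.perm_iff_count]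
      intro a
      conv_rhs => rw [hdecomp]
      simp only [List.count_append, List.count_cons, List.count_reverse, List.append_assoc,
        List.cons_append, beq_iff_eq]
      ring
    · exact List.Perm.refl l
  · rw [hop_not_mem x l hmem]

def hopAll : ℕ → List ℕ → List ℕ
  | 0, l => l
  | k+1, l => hopAll k (hop (k+1) l)

lemma hopAll_perm (k : ℕ) (l : List ℕ) : (hopAll k l).Perm l := by
  induction k generalizing l with
  | zero => exact List.Perm.refl l
  | succ k ih => exact (ih (hop (k+1) l)).trans (hop_perm (k+1) l)

lemma hopAll_high (k m : ℕ) (l : List ℕ) (hb : ∀ a ∈ l, a ≤ m) (hmk : m ≤ k) :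
    hopAll k l = hopAll m l := by
  induction k with
  | zero => have : m = 0 := by omega
            rw [this]
  | succ k ih =>
    rcases Nat.eq_or_lt_of_le hmk with h | h
    · rw [h]
    · have : (k+1) ∉ l := fun hc => by have := hb _ hc; omega
      show hopAll k (hop (k+1) l) = _
      rw [hop_not_mem _ _ this, ih (by omega)]

lemma hopAll_nil (k : ℕ) : hopAll k [] = [] := by
  induction k with
  | zero => rfl
  | succ k ih => show hopAll k (hop (k+1) []) = []; rw [hop_not_mem _ _ (by simp), ih]


lemma hopAll_split (m : ℕ) : ∀ k, k < m → ∀ u v : List ℕ, (u ++ m :: v).Nodup →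
    (∀ a ∈ u, a < m) → (∀ a ∈ v, a < m) →
    hopAll k (u ++ m :: v) = hopAll k u ++ m :: hopAll k v := by
  intro k
  induction k with
  | zero => intro _ u v _ _ _; rfl
  | succ k ih =>
    intro hkm u v hnd hu hv
    have hkm' : k < m := by omega
    have hd : List.Disjoint u v := by
      have := hnd
      rw [List.nodup_append'] at this
      exact fun a ha hav => this.2.2 ha (by simp [hav])
    by_cases hxu : (k+1) ∈ u
    · have hxv : (k+1) ∉ v := fun hc => hd hxu hc
      show hopAll k (hop (k+1) (u ++ m :: v)) = hopAll k (hop (k+1) u) ++ m :: hopAll k (hop (k+1) v)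
      rw [hop_left (k+1) m u v hxu (hu _ hxu), hop_not_mem _ _ hxv]
      apply ih hkm'
      · exact (((hop_perm (k+1) u).append_right (m :: v)).nodup_iff).mpr hnd
      · exact fun a ha => hu a ((hop_perm (k+1) u).mem_iff.mp ha)
      · exact hv
    · by_cases hxv : (k+1) ∈ v
      · show hopAll k (hop (k+1) (u ++ m :: v)) = hopAll k (hop (k+1) u) ++ m :: hopAll k (hop (k+1) v)
        rw [hop_right (k+1) m u v hxu hxv (hv _ hxv), hop_not_mem _ _ hxu]
        have hp : (u ++ m :: hop (k+1) v).Perm (u ++ m :: v) :=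
          List.Perm.append_left u ((hop_perm (k+1) v).cons m)
        apply ih hkm'
        · exact (hp.nodup_iff).mpr hnd
        · exact hu
        · exact fun a ha => hv a ((hop_perm (k+1) v).mem_iff.mp ha)
      · have hnm : (k+1) ∉ u ++ m :: v := by
          simp only [List.mem_append, List.mem_cons]
          push_neg
          exact ⟨hxu, by omega, hxv⟩
        show hopAll k (hop (k+1) (u ++ m :: v)) = hopAll k (hop (k+1) u) ++ m :: hopAll k (hop (k+1) v)
        rw [hop_not_mem _ _ hnm, hop_not_mem _ _ hxu, hop_not_mem _ _ hxv]
        exact ih hkm' u v hnd hu hv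

lemma hopAll_singleton (k x : ℕ) : hopAll k [x] = [x] := by
  induction k with
  | zero => rfl
  | succ k ih =>
    show hopAll k (hop (k+1) [x]) = [x]
    by_cases h : (k+1) = x
    · subst h
      have := hop_max (k+1) [] [] (by simp) (by simp)
      simp at this
      rw [this, ih]
    · rw [hop_not_mem _ _ (by simp [Ne, h]), ih]

lemma exists_max : ∀ l : List ℕ, l ≠ [] → ∃ m ∈ l, ∀ a ∈ l, a ≤ m := by
  intro l
  induction l with
  | nil => intro h; exact absurd rfl h
  | cons a t ih =>
    intro _
    rcases eq_or_ne t [] with rfl | ht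
    · exact ⟨a, by simp, by simp⟩
    · obtain ⟨m, hm, hmax⟩ := ih ht
      by_cases ham : a ≤ m
      · exact ⟨m, by simp [hm], by
          intro b hb; rcases List.mem_cons.mp hb with rfl | hb
          exacts [ham, hmax b hb]⟩
      · exact ⟨a, by simp, by
          intro b hb; rcases List.mem_cons.mp hb with rfl | hb
          exacts [le_refl _, (hmax b hb).trans (by omega)]⟩


lemma desR_cons_head (m : ℕ) (w : List ℕ) (hw : w ≠ []) (h : ∀ a ∈ w, a < m) :
    desR (m :: w) = 1 + desR w := by
  cases w with
  | nil => exact absurd rfl hw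
  | cons b t => simp [desR, h b (by simp)]

lemma main_aux (N : ℕ) : ∀ l : List ℕ, l.length ≤ N → l.Nodup → ∀ k, (∀ a ∈ l, a ≤ k) →
    hopAll k (hopAll k l) = l ∧ desR l + desR (hopAll k l) = l.length - 1 := by
  induction N with
  | zero =>
    intro l hlen _ k _
    have : l = [] := List.length_eq_zero_iff.mp (by omega)
    subst this
    simp [hopAll_nil, desR]
  | succ N ih =>
  intro l hlen hnd k hk
  rcases eq_or_ne l [] with rfl | hne
  · simp [hopAll_nil, desR]
  obtain ⟨m, hm, hmax⟩ := exists_max l hne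
  obtain ⟨u, v, rfl⟩ := List.append_of_mem hm
  have hlen' : u.length + v.length + 1 ≤ N + 1 := by
    have h := hlen; simp at h; omega
  have hndu : u.Nodup := (List.nodup_append.mp hnd).1
  have hndmv : (m :: v).Nodup := (List.nodup_append.mp hnd).2.1
  have hndv : v.Nodup := (List.nodup_cons.mp hndmv).2
  have hmu : m ∉ u := fun hc => (List.nodup_append'.mp hnd).2.2 hc (by simp)
  have hmv : m ∉ v := (List.nodup_cons.mp hndmv).1
  have hu : ∀ a ∈ u, a < m := fun a ha =>
    lt_of_le_of_ne (hmax a (by simp [ha])) (fun hc => hmu (hc ▸ ha))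
  have hv : ∀ a ∈ v, a < m := fun a ha =>
    lt_of_le_of_ne (hmax a (by simp [ha])) (fun hc => hmv (hc ▸ ha))
  have hmk : m ≤ k := hk m hm
  have hbnd : ∀ a ∈ u ++ m :: v, a ≤ m := fun a ha => hmax a ha
  rcases eq_or_ne u [] with rfl | hune <;> rcases eq_or_ne v [] with rfl | hvne
  · constructor
    · simp [hopAll_singleton]
    · simp [hopAll_singleton, desR]
  · -- u = [], v ≠ []
    have hm1 : 1 ≤ m := by
      obtain ⟨a, ha⟩ := List.exists_mem_of_ne_nil v hvne
      have := hv a ha; omega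
    obtain ⟨m', rfl⟩ : ∃ m', m = m' + 1 := ⟨m - 1, by omega⟩
    obtain ⟨ihv_inv, ihv_des⟩ := ih v (by omega) hndv m' (fun a ha => by have := hv a ha; omega)
    have hAv := hopAll_perm m' v
    have hAv_mem : ∀ a ∈ hopAll m' v, a < m' + 1 := fun a ha => hv a (hAv.mem_iff.mp ha)
    have hAv_ne : hopAll m' v ≠ [] := fun hc => by
      have h0 := hAv.length_eq; rw [hc] at h0
      exact hvne (List.length_eq_zero_iff.mp h0.symm)
    have hlen : (hopAll m' v).length = v.length := hAv.length_eq
    have hndvm : (v ++ (m' + 1) :: []).Nodup :=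
      (List.perm_append_singleton (m' + 1) v).nodup_iff.mpr hndmv
    have hndAvm : (hopAll m' v ++ (m' + 1) :: []).Nodup :=
      ((hAv.append_right [m' + 1]).nodup_iff).mpr hndvm
    have hndmAv : ([] ++ (m' + 1) :: hopAll m' v).Nodup := by
      simpa using ((hAv.cons (m' + 1)).nodup_iff).mpr hndmv
    have e1 : hopAll k ([] ++ (m' + 1) :: v) = hopAll m' v ++ (m' + 1) :: [] := by
      rw [hopAll_high k (m' + 1) _ hbnd hmk]
      show hopAll m' (hop (m' + 1) ([] ++ (m' + 1) :: v)) = _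
      rw [hop_max (m' + 1) [] v (by simp) hv, if_neg hvne, if_pos rfl,
        show (v ++ [m' + 1] : List ℕ) = v ++ (m' + 1) :: ([] : List ℕ) from rfl,
        hopAll_split (m' + 1) m' (by omega) v [] hndvm hv (by simp), hopAll_nil]
    have e2 : hopAll k (hopAll m' v ++ (m' + 1) :: []) = [] ++ (m' + 1) :: v := by
      rw [hopAll_high k (m' + 1) _ (by
          intro a ha
          rcases List.mem_append.mp ha with h | h
          · exact (hAv_mem a h).le
          · simp at h; omega) hmk]
      show hopAll m' (hop (m' + 1) (hopAll m' v ++ (m' + 1) :: [])) = _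
      rw [hop_max (m' + 1) (hopAll m' v) [] hAv_mem (by simp), if_pos rfl,
        show ((m' + 1) :: hopAll m' v : List ℕ) = [] ++ (m' + 1) :: hopAll m' v from rfl,
        hopAll_split (m' + 1) m' (by omega) [] (hopAll m' v) hndmAv (by simp) hAv_mem,
        hopAll_nil, ihv_inv]
    constructor
    · rw [e1, e2]
    · rw [e1, desR_append (hopAll m' v) (m' + 1) [] hAv_mem]
      have d1 : desR ([] ++ (m' + 1) :: v) = 1 + desR v := by
        simpa using desR_cons_head (m' + 1) v hvne hv
      have d2 : desR ((m' + 1) :: ([] : List ℕ)) = 0 := rfl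
      rw [d1, d2]
      have hvl : 1 ≤ v.length := List.length_pos_iff.mpr hvne
      simp only [List.nil_append, List.length_cons]
      omega
  · -- u ≠ [], v = []
    have hm1 : 1 ≤ m := by
      obtain ⟨a, ha⟩ := List.exists_mem_of_ne_nil u hune
      have := hu a ha; omega
    obtain ⟨m', rfl⟩ : ∃ m', m = m' + 1 := ⟨m - 1, by omega⟩
    obtain ⟨ihu_inv, ihu_des⟩ := ih u (by omega) hndu m' (fun a ha => by have := hu a ha; omega)
    have hAu := hopAll_perm m' u
    have hAu_mem : ∀ a ∈ hopAll m' u, a < m' + 1 := fun a ha => hu a (hAu.mem_iff.mp ha)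
    have hAu_ne : hopAll m' u ≠ [] := fun hc => by
      have h0 := hAu.length_eq; rw [hc] at h0
      exact hune (List.length_eq_zero_iff.mp h0.symm)
    have hlen : (hopAll m' u).length = u.length := hAu.length_eq
    have hndmu : ([] ++ (m' + 1) :: u).Nodup := by
      simpa using (List.perm_append_singleton (m' + 1) u).nodup_iff.mp hnd
    have hndmAu : ([] ++ (m' + 1) :: hopAll m' u).Nodup := by
      have : ((m' + 1) :: hopAll m' u).Perm ((m' + 1) :: u) := hAu.cons (m' + 1)
      simpa using this.nodup_iff.mpr (by simpa using hndmu)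
    have hndAum : (hopAll m' u ++ (m' + 1) :: []).Nodup :=
      ((hAu.append_right [m' + 1]).nodup_iff).mpr hnd
    have e1 : hopAll k (u ++ (m' + 1) :: []) = (m' + 1) :: hopAll m' u := by
      rw [hopAll_high k (m' + 1) _ hbnd hmk]
      show hopAll m' (hop (m' + 1) (u ++ (m' + 1) :: [])) = _
      rw [hop_max (m' + 1) u [] hu (by simp), if_pos rfl,
        show ((m' + 1) :: u : List ℕ) = [] ++ (m' + 1) :: u from rfl,
        hopAll_split (m' + 1) m' (by omega) [] u hndmu (by simp) hu, hopAll_nil]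
      rfl
    have e2 : hopAll k ((m' + 1) :: hopAll m' u) = u ++ (m' + 1) :: [] := by
      rw [hopAll_high k (m' + 1) _ (by
          intro a ha
          rcases List.mem_cons.mp ha with rfl | h
          · omega
          · exact (hAu_mem a h).le) hmk]
      show hopAll m' (hop (m' + 1) ((m' + 1) :: hopAll m' u)) = _
      rw [show ((m' + 1) :: hopAll m' u : List ℕ) = [] ++ (m' + 1) :: hopAll m' u from rfl,
        hop_max (m' + 1) [] (hopAll m' u) (by simp) hAu_mem, if_neg hAu_ne, if_pos rfl,
        show (hopAll m' u ++ [m' + 1] : List ℕ) = hopAll m' u ++ (m' + 1) :: ([] : List ℕ)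
          from rfl,
        hopAll_split (m' + 1) m' (by omega) (hopAll m' u) [] hndAum hAu_mem (by simp),
        hopAll_nil, ihu_inv]
    constructor
    · rw [e1, e2]
    · rw [e1, desR_append u (m' + 1) [] hu]
      have d1 : desR ((m' + 1) :: hopAll m' u) = 1 + desR (hopAll m' u) :=
        desR_cons_head (m' + 1) (hopAll m' u) hAu_ne hAu_mem
      have d2 : desR ((m' + 1) :: ([] : List ℕ)) = 0 := rfl
      rw [d1, d2]
      simp only [List.length_append, List.length_cons, List.length_nil]
      have hul : 1 ≤ u.length := List.length_pos_iff.mpr hune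
      omega
  · -- u ≠ [], v ≠ []
    have hm1 : 1 ≤ m := by
      obtain ⟨a, ha⟩ := List.exists_mem_of_ne_nil u hune
      have := hu a ha; omega
    obtain ⟨m', rfl⟩ : ∃ m', m = m' + 1 := ⟨m - 1, by omega⟩
    obtain ⟨ihu_inv, ihu_des⟩ := ih u (by omega) hndu m' (fun a ha => by have := hu a ha; omega)
    obtain ⟨ihv_inv, ihv_des⟩ := ih v (by omega) hndv m' (fun a ha => by have := hv a ha; omega)
    have hAu := hopAll_perm m' u
    have hAv := hopAll_perm m' v
    have hAu_mem : ∀ a ∈ hopAll m' u, a < m' + 1 := fun a ha => hu a (hAu.mem_iff.mp ha)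
    have hAv_mem : ∀ a ∈ hopAll m' v, a < m' + 1 := fun a ha => hv a (hAv.mem_iff.mp ha)
    have hAu_ne : hopAll m' u ≠ [] := fun hc => by
      have h0 := hAu.length_eq; rw [hc] at h0
      exact hune (List.length_eq_zero_iff.mp h0.symm)
    have hAv_ne : hopAll m' v ≠ [] := fun hc => by
      have h0 := hAv.length_eq; rw [hc] at h0
      exact hvne (List.length_eq_zero_iff.mp h0.symm)
    have hndA : (hopAll m' u ++ (m' + 1) :: hopAll m' v).Nodup :=
      ((hAu.append ((hAv.cons (m' + 1)))).nodup_iff).mpr hnd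
    have e1 : hopAll k (u ++ (m' + 1) :: v) = hopAll m' u ++ (m' + 1) :: hopAll m' v := by
      rw [hopAll_high k (m' + 1) _ hbnd hmk]
      show hopAll m' (hop (m' + 1) (u ++ (m' + 1) :: v)) = _
      rw [hop_max (m' + 1) u v hu hv, if_neg hvne, if_neg hune,
        hopAll_split (m' + 1) m' (by omega) u v hnd hu hv]
    have e2 : hopAll k (hopAll m' u ++ (m' + 1) :: hopAll m' v) = u ++ (m' + 1) :: v := by
      rw [hopAll_high k (m' + 1) _ (by
          intro a ha
          rcases List.mem_append.mp ha with h | h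
          · exact (hAu_mem a h).le
          · rcases List.mem_cons.mp h with rfl | h
            · omega
            · exact (hAv_mem a h).le) hmk]
      show hopAll m' (hop (m' + 1) (hopAll m' u ++ (m' + 1) :: hopAll m' v)) = _
      rw [hop_max (m' + 1) (hopAll m' u) (hopAll m' v) hAu_mem hAv_mem,
        if_neg hAv_ne, if_neg hAu_ne,
        hopAll_split (m' + 1) m' (by omega) (hopAll m' u) (hopAll m' v) hndA hAu_mem hAv_mem,
        ihu_inv, ihv_inv]
    constructor
    · rw [e1, e2]
    · rw [e1, desR_append u (m' + 1) v hu,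
        desR_append (hopAll m' u) (m' + 1) (hopAll m' v) hAu_mem,
        desR_cons_head (m' + 1) v hvne hv,
        desR_cons_head (m' + 1) (hopAll m' v) hAv_ne hAv_mem]
      have hlu : (hopAll m' u).length = u.length := hAu.length_eq
      have hlv : (hopAll m' v).length = v.length := hAv.length_eq
      have hul : 1 ≤ u.length := List.length_pos_iff.mpr hune
      have hvl : 1 ≤ v.length := List.length_pos_iff.mpr hvne
      simp only [List.length_append, List.length_cons, List.length_nil]
      omega

lemma main (l : List ℕ) (hnd : l.Nodup) (k : ℕ) (hk : ∀ a ∈ l, a ≤ k) :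
    hopAll k (hopAll k l) = l ∧ desR l + desR (hopAll k l) = l.length - 1 :=
  main_aux l.length l (le_refl _) hnd k hk

lemma reach (k : ℕ) (l : List ℕ) :
    Relation.EqvGen (fun a b => ∃ x ∈ a, hop x a = b) l (hopAll k l) := by
  induction k generalizing l with
  | zero => exact Relation.EqvGen.refl l
  | succ k ih =>
    refine Relation.EqvGen.trans _ (hop (k+1) l) _ ?_ (ih (hop (k+1) l))
    by_cases h : (k+1) ∈ l
    · exact Relation.EqvGen.rel _ _ ⟨k+1, h, rfl⟩
    · rw [hop_not_mem _ _ h]; exact Relation.EqvGen.refl l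

lemma eqv_perm {a b : List ℕ} (h : Relation.EqvGen (fun a b => ∃ x ∈ a, hop x a = b) a b) :
    a.Perm b := by
  induction h with
  | rel x y hr => obtain ⟨c, _, rfl⟩ := hr; exact (hop_perm c x).symm
  | refl x => exact List.Perm.refl x
  | symm x y _ ihp => exact ihp.symm
  | trans x y z _ _ ih1 ih2 => exact ih1.trans ih2

/-- The descent number is homomesic with average `(n−1)/2` under valley-hopping:
if `O` is the orbit of a permutation `π` of [n] under the group action generated by the
hops `φ_x`, then the average of `des` over `O` is `(n−1)/2`, i.e.
`2 · ∑_{σ ∈ O} des(σ) = (n−1) · |O|`. -/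
theorem stmt_12 (n : ℕ) (π : List ℕ) (hπ : π.Perm (List.range' 1 n))
    (O : Finset (List ℕ))
    (hO : ∀ σ, σ ∈ O ↔ Relation.EqvGen (fun a b => ∃ x ∈ a, hop x a = b) π σ) :
    2 * ∑ σ ∈ O, desL σ = (n - 1) * O.card := by
  have hperm : ∀ σ ∈ O, σ.Perm (List.range' 1 n) := fun σ hσ =>
    ((eqv_perm ((hO σ).mp hσ)).symm.trans hπ)
  have hbnd : ∀ σ ∈ O, ∀ a ∈ σ, a ≤ n := by
    intro σ hσ a ha
    have := (hperm σ hσ).mem_iff.mp ha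
    rw [List.mem_range'_1] at this
    omega
  have hnd : ∀ σ ∈ O, σ.Nodup := fun σ hσ =>
    (hperm σ hσ).nodup_iff.mpr (List.nodup_range' (s := 1) (n := n))
  have hlen : ∀ σ ∈ O, σ.length = n := fun σ hσ => by
    have := (hperm σ hσ).length_eq
    rwa [List.length_range'] at this
  have hmemf : ∀ σ ∈ O, hopAll n σ ∈ O := fun σ hσ =>
    (hO _).mpr (Relation.EqvGen.trans _ _ _ ((hO σ).mp hσ) (reach n σ))
  have hinv : ∀ σ ∈ O, hopAll n (hopAll n σ) = σ := fun σ hσ =>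
    (main σ (hnd σ hσ) n (hbnd σ hσ)).1
  have hdes : ∀ σ ∈ O, desL σ + desL (hopAll n σ) = n - 1 := by
    intro σ hσ
    have := (main σ (hnd σ hσ) n (hbnd σ hσ)).2
    rw [hlen σ hσ] at this
    rw [desL_eq_desR, desL_eq_desR]
    exact this
  have hsum : ∑ σ ∈ O, desL σ = ∑ σ ∈ O, desL (hopAll n σ) :=
    Finset.sum_nbij' (fun σ => hopAll n σ) (fun σ => hopAll n σ)
      hmemf hmemf hinv hinv
      (fun σ hσ => rfl) |>.symm
  have : 2 * ∑ σ ∈ O, desL σ = ∑ σ ∈ O, (desL σ + desL (hopAll n σ)) := by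
    rw [Finset.sum_add_distrib, ← hsum]; ring
  rw [this, Finset.sum_congr rfl hdes, Finset.sum_const, smul_eq_mul, Nat.mul_comm]

end DMTCS
end

section
/- Let π have rix-factorization π = α_1 ⋯ α_k β. If y is a leading descent of π, then either y is a letter of β, or y is the last letter of α_i for some 1 ≤ i ≤ k. -/
namespace DMTCS

def IsDescentOf (l : List ℕ) (d : ℕ) : Prop :=
  ∃ i, i + 1 < l.length ∧ l.getD i 0 = d ∧ l.getD (i + 1) 0 < d

/-- The rix-factorization algorithm of Lin and Zeng: returns the list of α-factors
and the final factor β. -/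
def rixFact (l : List ℕ) : List (List ℕ) × List ℕ :=
  if h : l.length < 2 then ([], l)
  else
    let dvals := ((List.range (l.length - 1)).filter
      (fun i => decide (l.getD (i + 1) 0 < l.getD i 0))).map (fun i => l.getD i 0)
    if dvals = [] then ([], l)
    else
      let x := dvals.foldr max 0
      let p := l.idxOf x
      if p = 0 then ([], l)
      else
        have : (l.drop (p + 1)).length < l.length := by
          simp only [List.length_drop]; omega
        let r := rixFact (l.drop (p + 1))
        (l.take (p + 1) :: r.1, r.2)
termination_by l.length

/-- `β₁(π)`, the first letter of the rix-factor `β`. -/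
def beta1 (l : List ℕ) : ℕ := (rixFact l).2.headD 0

/-- `y` is a rixed point of `l`: it lies in the maximal increasing suffix of `l`
(equivalently, in some strictly increasing suffix) and is not smaller than `β₁(l)`. -/
def RixPt (l : List ℕ) (y : ℕ) : Prop :=
  (∃ t, t <:+ l ∧ List.Pairwise (· < ·) t ∧ y ∈ t) ∧ beta1 l ≤ y

/-- `y` is a leading descent of `l`: `y` is a descent and no larger descent of `l`
appears after it. -/
def IsLeadingDesc (l : List ℕ) (y : ℕ) : Prop :=
  ∃ i, i + 1 < l.length ∧ l.getD i 0 = y ∧ l.getD (i + 1) 0 < y ∧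
    ∀ j, i < j → j + 1 < l.length → l.getD (j + 1) 0 < l.getD j 0 → l.getD j 0 ≤ y

/-- The list of descent values. -/
def dlist (l : List ℕ) : List ℕ :=
  ((List.range (l.length - 1)).filter
      (fun i => decide (l.getD (i + 1) 0 < l.getD i 0))).map (fun i => l.getD i 0)

lemma foldr_max_mem (L : List ℕ) (h : L ≠ []) : L.foldr max 0 ∈ L := by
  induction L with
  | nil => simp at h
  | cons a L ih =>
    rw [List.foldr_cons]
    rcases eq_or_ne L [] with rfl | hL
    · simp
    · rcases max_choice a (L.foldr max 0) with h' | h' <;> rw [h']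
      · exact List.mem_cons_self
      · exact List.mem_cons_of_mem _ (ih hL)

lemma le_foldr_max {L : List ℕ} {a : ℕ} (h : a ∈ L) : a ≤ L.foldr max 0 := by
  induction L with
  | nil => simp at h
  | cons b L ih =>
    rw [List.foldr_cons]
    rcases List.mem_cons.1 h with rfl | h
    · exact le_max_left _ _
    · exact le_trans (ih h) (le_max_right _ _)

lemma rixFact_eq0 (l : List ℕ) (h2 : ¬ l.length < 2) (hdv : dlist l ≠ [])
    (hp : l.idxOf ((dlist l).foldr max 0) = 0) : rixFact l = ([], l) := by
  unfold dlist at hdv hp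
  rw [rixFact.eq_def]
  simp only [dif_neg h2, if_neg hdv, if_pos hp]

lemma rixFact_eq (l : List ℕ) (h2 : ¬ l.length < 2)
    (hdv : dlist l ≠ []) (hp : l.idxOf ((dlist l).foldr max 0) ≠ 0) :
    rixFact l = (l.take (l.idxOf ((dlist l).foldr max 0) + 1) ::
        (rixFact (l.drop (l.idxOf ((dlist l).foldr max 0) + 1))).1,
        (rixFact (l.drop (l.idxOf ((dlist l).foldr max 0) + 1))).2) := by
  unfold dlist at hdv hp
  rw [rixFact.eq_def]
  simp only [dif_neg h2, if_neg hdv, if_neg hp, dlist]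

theorem aux (l : List ℕ) (hnd : l.Nodup) (y : ℕ) (hy : IsLeadingDesc l y) :
    y ∈ (rixFact l).2 ∨ ∃ α ∈ (rixFact l).1, α.getLast? = some y := by
  obtain ⟨i, hi1, hiy, hides, hlead⟩ := hy
  have hil : i < l.length := by omega
  have h2 : ¬ l.length < 2 := by omega
  have hyl : y ∈ l := by
    rw [← hiy, List.getD_eq_getElem l 0 hil]; exact List.getElem_mem _
  -- y is a descent value
  have hydv : y ∈ dlist l := by
    unfold dlist
    refine List.mem_map.2 ⟨i, List.mem_filter.2 ⟨List.mem_range.2 (by omega), ?_⟩, hiy⟩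
    simp only [decide_eq_true_eq]
    rw [hiy]; exact hides
  have hdv : dlist l ≠ [] := fun h => by simp [h] at hydv
  set x := (dlist l).foldr max 0 with hx
  have hyx : y ≤ x := le_foldr_max hydv
  -- x is a descent value at some position i'
  have hxdv : x ∈ dlist l := foldr_max_mem _ hdv
  obtain ⟨i', hi'mem, hi'x⟩ := List.mem_map.1 hxdv
  have hi'range := List.mem_range.1 (List.mem_filter.1 hi'mem).1
  have hi'des : l.getD (i' + 1) 0 < l.getD i' 0 := by
    have := (List.mem_filter.1 hi'mem).2; simpa using this
  have hi'l : i' < l.length := by omega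
  have hxl : x ∈ l := by
    rw [← hi'x, List.getD_eq_getElem l 0 hi'l]; exact List.getElem_mem _
  set p := l.idxOf x with hpdef
  by_cases hp0 : p = 0
  · rw [rixFact_eq0 l h2 hdv (hx ▸ hp0)]; left; exact hyl
  have hpl : p < l.length := List.idxOf_lt_length_iff.2 hxl
  have hpx : l[p] = x := List.getElem_idxOf hpl
  -- uniqueness: i' = p
  have hi'p : i' = p := by
    apply (List.Nodup.getElem_inj_iff hnd).1
    rw [hpx, ← hi'x, List.getD_eq_getElem l 0 hi'l]
  have hgpx : l.getD p 0 = x := by rw [List.getD_eq_getElem l 0 hpl, hpx]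
  have hpdes : l.getD (p + 1) 0 < x := by
    rw [hi'p] at hi'des; rwa [hgpx] at hi'des
  have hp1 : p + 1 < l.length := by omega
  -- p ≤ i
  have hpi : p ≤ i := by
    by_contra hc
    push_neg at hc
    have hxley : x ≤ y := by
      have := hlead p hc hp1 (by rw [hgpx]; exact hpdes)
      rwa [hgpx] at this
    have hxy : x = y := le_antisymm hxley hyx
    have : i = p := by
      apply (List.Nodup.getElem_inj_iff hnd).1
      rw [hpx, ← List.getD_eq_getElem l 0 hil, hiy, hxy]
    omega
  rcases eq_or_lt_of_le hpi with rfl | hplt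
  · -- y = x, last letter of the first α-factor
    have hxy : x = y := by rw [← hgpx, hiy]
    rw [rixFact_eq l h2 hdv (hx ▸ hp0)]
    right
    refine ⟨l.take (p + 1), List.mem_cons_self, ?_⟩
    rw [List.take_succ, List.getElem?_eq_getElem hpl]
    simp [List.getLast?_concat, hpx, hxy]
  · -- recurse on the drop
    rw [rixFact_eq l h2 hdv (hx ▸ hp0)]
    have hdnd : (l.drop (p + 1)).Nodup := hnd.sublist (List.drop_sublist _ _)
    have hgd : ∀ k, (l.drop (p+1)).getD k 0 = l.getD (p + 1 + k) 0 := by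
      intro k
      simp [List.getD_eq_getElem?_getD, List.getElem?_drop]
    have hld : IsLeadingDesc (l.drop (p + 1)) y := by
      refine ⟨i - (p + 1), ?_, ?_, ?_, ?_⟩
      · simp only [List.length_drop]; omega
      · rw [hgd]; rw [show p + 1 + (i - (p+1)) = i by omega]; exact hiy
      · rw [hgd]; rw [show p + 1 + (i - (p+1) + 1) = i + 1 by omega]; exact hides
      · intro j hj hj1 hjd
        simp only [hgd] at hjd ⊢
        rw [show p + 1 + (j + 1) = (p + 1 + j) + 1 by omega] at hjd
        simp only [List.length_drop] at hj1
        exact hlead (p + 1 + j) (by omega) (by omega) hjd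
    have := aux (l.drop (p + 1)) hdnd y hld
    rcases this with h | ⟨α, hα, hαl⟩
    · left; exact h
    · right; exact ⟨α, List.mem_cons_of_mem _ hα, hαl⟩
termination_by l.length
decreasing_by simp only [List.length_drop]; omega

/-- If `y` is a leading descent of `π`, then `y` is a letter of the rix-factor `β`
or the last letter of some α-factor. -/
theorem stmt_15 (n : ℕ) (l : List ℕ) (hl : l.Perm (List.range' 1 n))
    (y : ℕ) (hy : IsLeadingDesc l y) :
    y ∈ (rixFact l).2 ∨ ∃ α ∈ (rixFact l).1, α.getLast? = some y :=
  aux l (hl.nodup_iff.2 (List.nodup_range' ..)) y hy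

end DMTCS
end
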